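/- Let m be a positive integer and η, α ∈ ℤ₊^m with |α| = |η|, α ≠ η, and let N be a positive integer with N ≥ |η| + 2. Then ∏_{t=1}^m (N − η_t + α_t)! > (N!)^m, provided N − η_t + α_t ≥ 0 for all t. -/

import Mathlib

lemma factA (a k : ℕ) : Nat.factorial (a + k) ≤ Nat.factorial a * (a + k) ^ k := by
  induction k with
  | zero => simp
  | succ n ih =>
    have h1 : Nat.factorial (a + (n+1)) = (a + n + 1) * Nat.factorial (a + n) := by
      rw [← Nat.add_assoc]; rfl
    calc Nat.factorial (a + (n+1)) = (a + n + 1) * Nat.factorial (a + n) := h1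
      _ ≤ (a + n + 1) * (Nat.factorial a * (a + n) ^ n) := Nat.mul_le_mul_left _ ih
      _ ≤ (a + n + 1) * (Nat.factorial a * (a + n + 1) ^ n) := by
          exact Nat.mul_le_mul_left _ (Nat.mul_le_mul_left _
            (Nat.pow_le_pow_left (Nat.le_succ _) n))
      _ = Nat.factorial a * (a + (n+1)) ^ (n+1) := by ring_nf
  
lemma factB (a k : ℕ) : Nat.factorial a * (a + 1) ^ k ≤ Nat.factorial (a + k) := by
  induction k with
  | zero => simp
  | succ n ih =>
    have h1 : Nat.factorial (a + (n+1)) = (a + n + 1) * Nat.factorial (a + n) := by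
      rw [← Nat.add_assoc]; rfl
    calc Nat.factorial a * (a + 1) ^ (n+1)
        = (a + 1) * (Nat.factorial a * (a + 1) ^ n) := by ring
      _ ≤ (a + 1) * Nat.factorial (a + n) := Nat.mul_le_mul_left _ ih
      _ ≤ (a + n + 1) * Nat.factorial (a + n) := Nat.mul_le_mul_right _ (by omega)
      _ = Nat.factorial (a + (n+1)) := h1.symm

lemma factkey (N d : ℕ) :
    Nat.factorial N * (N + 1) ^ (d - N) ≤ Nat.factorial d * N ^ (N - d) := by
  rcases le_total d N with h | h
  · have : d - N = 0 := by omega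
    rw [this, pow_zero, mul_one]
    have := factA d (N - d)
    rwa [Nat.add_sub_cancel' h] at this
  · have : N - d = 0 := by omega
    rw [this, pow_zero, mul_one]
    have := factB N (d - N)
    rwa [Nat.add_sub_cancel' h] at this

theorem stmt_2 (m : ℕ) (hm : 0 < m) (η α : Fin m → ℕ)
    (hsum : ∑ t, α t = ∑ t, η t) (hne : α ≠ η)
    (N : ℕ) (hN : 0 < N) (hN2 : (∑ t, η t) + 2 ≤ N)
    (hnonneg : ∀ t, η t ≤ N + α t) :
    ∏ t, Nat.factorial (N - η t + α t) > (Nat.factorial N) ^ m := by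
  obtain ⟨d, hd⟩ : ∃ d : Fin m → ℕ, ∀ t, d t = N - η t + α t := ⟨_, fun _ => rfl⟩
  have hgoal : ∏ t, Nat.factorial (N - η t + α t) = ∏ t, Nat.factorial (d t) := by
    exact Finset.prod_congr rfl (fun t _ => by rw [hd t])
  rw [hgoal]
  have hηle : ∀ t, η t ≤ N := by
    intro t
    have := Finset.single_le_sum (f := η) (fun i _ => Nat.zero_le _) (Finset.mem_univ t)
    omega
  have hsd : ∑ t, d t = m * N := by
    have h1 : ∑ t, d t + ∑ t, η t = ∑ _t : Fin m, (N : ℕ) + ∑ t, α t := by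
      rw [← Finset.sum_add_distrib, ← Finset.sum_add_distrib]
      exact Finset.sum_congr rfl (fun t _ => by have := hηle t; rw [hd t]; omega)
    rw [Finset.sum_const, Finset.card_univ, Fintype.card_fin, smul_eq_mul] at h1
    omega
  set Se := ∑ t, (d t - N) with hSe
  set Sf := ∑ t, (N - d t) with hSf
  have hef : Se = Sf := by
    have h1 : Se + ∑ t, min (d t) N = ∑ t, d t := by
      rw [hSe, ← Finset.sum_add_distrib]
      exact Finset.sum_congr rfl (fun t _ => by omega)
    have h2 : Sf + ∑ t, min (d t) N = ∑ _t : Fin m, (N : ℕ) := by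
      rw [hSf, ← Finset.sum_add_distrib]
      exact Finset.sum_congr rfl (fun t _ => by omega)
    rw [Finset.sum_const, Finset.card_univ, Fintype.card_fin, smul_eq_mul] at h2
    omega
  have hS : 1 ≤ Se := by
    obtain ⟨t, ht⟩ : ∃ t, α t ≠ η t := by
      by_contra h
      push_neg at h
      exact hne (funext h)
    have hdt : d t ≠ N := by
      have := hηle t
      rw [hd t]
      omega
    rcases lt_or_gt_of_ne hdt with h | h
    · have h1 : N - d t ≤ Sf := by
        have := Finset.single_le_sum (f := fun t => N - d t)
          (fun i _ => Nat.zero_le _) (Finset.mem_univ t)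
        simpa using this
      omega
    · have h1 : d t - N ≤ Se := by
        have := Finset.single_le_sum (f := fun t => d t - N)
          (fun i _ => Nat.zero_le _) (Finset.mem_univ t)
        simpa using this
      omega
  have hmain : (Nat.factorial N) ^ m * (N + 1) ^ Se ≤ (∏ t, Nat.factorial (d t)) * N ^ Sf := by
    have h1 : ∀ t ∈ Finset.univ (α := Fin m),
        Nat.factorial N * (N + 1) ^ (d t - N) ≤ Nat.factorial (d t) * N ^ (N - d t) :=
      fun t _ => factkey N (d t)
    have h2 := Finset.prod_le_prod' h1
    rwa [Finset.prod_mul_distrib, Finset.prod_mul_distrib, Finset.prod_const,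
      Finset.card_univ, Fintype.card_fin, Finset.prod_pow_eq_pow_sum,
      Finset.prod_pow_eq_pow_sum] at h2
  have hlt : (Nat.factorial N) ^ m * N ^ Se < (Nat.factorial N) ^ m * (N + 1) ^ Se := by
    have hpos : 0 < (Nat.factorial N) ^ m := Nat.pow_pos (Nat.factorial_pos N)
    exact (mul_lt_mul_iff_right₀ hpos).mpr (Nat.pow_lt_pow_left (Nat.lt_succ_self N) (by omega))
  have hfin : (Nat.factorial N) ^ m * N ^ Se < (∏ t, Nat.factorial (d t)) * N ^ Se :=
    calc (Nat.factorial N) ^ m * N ^ Se < (Nat.factorial N) ^ m * (N + 1) ^ Se := hlt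
      _ ≤ (∏ t, Nat.factorial (d t)) * N ^ Sf := hmain
      _ = (∏ t, Nat.factorial (d t)) * N ^ Se := by rw [hef]
  exact Nat.lt_of_mul_lt_mul_right hfin
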